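/- Fix s₁, s₂ ∈ ℝ² with ‖s₁ − s₂‖ = h > 0, and let μ be a probability measure on (0,∞)² (the law of the pair of radii (r₁, r₂)). For (r₁, r₂) ∈ (0,∞)², let A₁₂(r₁, r₂; h) be the Lebesgue area of B(s₁, r₁) ∩ B(s₂, r₂), set δ_i = A₁₂(r₁, r₂; h)/(π r_i²) and x_i = π r_i² − A₁₂(r₁, r₂; h) for i = 1, 2, and define F₁₂(z₁, z₂) = ∫ exp(−x₁/(π r₁² z₁) − x₂/(π r₂² z₂) − A₁₂(r₁, r₂; h)·max{1/(π r₁² z₁), 1/(π r₂² z₂)}) dμ(r₁, r₂). Then for all u₁, u₂ ∈ (0, 1), F₁₂(−1/log u₁, −1/log u₂) = ∫ u₁^{1−δ₁}·u₂^{1−δ₂}·min{u₁^{δ₁}, u₂^{δ₂}} dμ(r₁, r₂); i.e. the copula of the simplified max-convolution process is the mixture of Marshall–Olkin copulas given in equation (eq-copcdf) of the paper. -/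

import Mathlib

open MeasureTheory Metric Real

/- At the Fréchet quantile `zᵢ = -1/log uᵢ` one has `1/(π rᵢ² zᵢ) = -log uᵢ / (π rᵢ²)`, so the
exponent of the integrand of `F₁₂` becomes `Σ (1 - δᵢ) log uᵢ + min (δ₁ log u₁) (δ₂ log u₂)`
(using `A₁₂ ≥ 0` to pull it through the max), and exponentiating gives the Marshall–Olkin
integrand pointwise. -/

/-- The overlap area `A₁₂` of the two disks of radii `r₁, r₂` centered at `s₁, s₂`. -/
noncomputable def A12 (s₁ s₂ : EuclideanSpace ℝ (Fin 2)) (r₁ r₂ : ℝ) : ℝ :=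
  (volume (ball s₁ r₁ ∩ ball s₂ r₂)).toReal

lemma A12_nonneg (s₁ s₂ : EuclideanSpace ℝ (Fin 2)) (r₁ r₂ : ℝ) : 0 ≤ A12 s₁ s₂ r₁ r₂ :=
  ENNReal.toReal_nonneg

lemma one_div_mul_neg_one_div (P L : ℝ) : 1 / (P * (-1 / L)) = -(L / P) := by
  simp [div_eq_mul_inv, mul_comm]

lemma frechet_exponent_eq (a P₁ P₂ L₁ L₂ : ℝ) (ha : 0 ≤ a) (hP₁ : P₁ ≠ 0) (hP₂ : P₂ ≠ 0) :
    -(P₁ - a) / (P₁ * (-1 / L₁)) - (P₂ - a) / (P₂ * (-1 / L₂))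
        - a * max (1 / (P₁ * (-1 / L₁))) (1 / (P₂ * (-1 / L₂)))
      = L₁ * (1 - a / P₁) + L₂ * (1 - a / P₂) + min (L₁ * (a / P₁)) (L₂ * (a / P₂)) := by
  simp only [div_eq_mul_one_div (_ - a), one_div_mul_neg_one_div, max_neg_neg,
    mul_neg, sub_neg_eq_add, mul_min_of_nonneg _ _ ha]
  have hmin : min (a * (L₁ / P₁)) (a * (L₂ / P₂)) = min (L₁ * (a / P₁)) (L₂ * (a / P₂)) := by
    congr 1 <;> ring
  rw [hmin]
  field_simp

lemma exp_log_mul_add_min_eq_rpow {u₁ u₂ : ℝ} (hu₁ : 0 < u₁) (hu₂ : 0 < u₂) (x₁ x₂ y₁ y₂ : ℝ) :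
    exp (log u₁ * x₁ + log u₂ * x₂ + min (log u₁ * y₁) (log u₂ * y₂))
      = u₁ ^ x₁ * u₂ ^ x₂ * min (u₁ ^ y₁) (u₂ ^ y₂) := by
  rw [rpow_def_of_pos hu₁, rpow_def_of_pos hu₂, rpow_def_of_pos hu₁, rpow_def_of_pos hu₂,
    ← exp_monotone.map_min, ← exp_add, ← exp_add]

theorem max_convolution_copula_is_MO_mixture_general
    (s₁ s₂ : EuclideanSpace ℝ (Fin 2))
    (μ : Measure (ℝ × ℝ))
    (hsupp : ∀ᵐ p ∂μ, 0 < p.1 ∧ 0 < p.2)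
    (F : ℝ → ℝ → ℝ)
    (hF : ∀ z₁ z₂ : ℝ, F z₁ z₂ = ∫ p : ℝ × ℝ,
      Real.exp (-(π * p.1 ^ 2 - A12 s₁ s₂ p.1 p.2) / (π * p.1 ^ 2 * z₁)
        - (π * p.2 ^ 2 - A12 s₁ s₂ p.1 p.2) / (π * p.2 ^ 2 * z₂)
        - A12 s₁ s₂ p.1 p.2 * max (1 / (π * p.1 ^ 2 * z₁)) (1 / (π * p.2 ^ 2 * z₂))) ∂μ)
    (u₁ u₂ : ℝ) (hu1 : u₁ ∈ Set.Ioo (0 : ℝ) 1) (hu2 : u₂ ∈ Set.Ioo (0 : ℝ) 1) :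
    F (-1 / Real.log u₁) (-1 / Real.log u₂)
      = ∫ p : ℝ × ℝ,
          u₁ ^ (1 - A12 s₁ s₂ p.1 p.2 / (π * p.1 ^ 2))
            * u₂ ^ (1 - A12 s₁ s₂ p.1 p.2 / (π * p.2 ^ 2))
            * min (u₁ ^ (A12 s₁ s₂ p.1 p.2 / (π * p.1 ^ 2)))
                (u₂ ^ (A12 s₁ s₂ p.1 p.2 / (π * p.2 ^ 2))) ∂μ := by
  rw [hF]
  refine integral_congr_ae ?_
  filter_upwards [hsupp] with p ⟨hr₁, hr₂⟩
  rw [frechet_exponent_eq _ _ _ _ _ (A12_nonneg ..) (by positivity) (by positivity),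
    exp_log_mul_add_min_eq_rpow hu1.1 hu2.1]

/-- The copula of the simplified max-convolution process is the mixture of
Marshall–Olkin copulas: evaluating the bivariate cdf `F₁₂` at the Fréchet quantiles
`-1/log uᵢ` gives `∫ u₁^{1-δ₁} u₂^{1-δ₂} min{u₁^{δ₁}, u₂^{δ₂}} dμ`. -/
theorem max_convolution_copula_is_MO_mixture
    (s₁ s₂ : EuclideanSpace ℝ (Fin 2)) (h : ℝ) (hd : dist s₁ s₂ = h) (hh : 0 < h)
    (μ : Measure (ℝ × ℝ)) [IsProbabilityMeasure μ]
    (hsupp : ∀ᵐ p ∂μ, 0 < p.1 ∧ 0 < p.2)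
    (F : ℝ → ℝ → ℝ)
    (hF : ∀ z₁ z₂ : ℝ, F z₁ z₂ = ∫ p : ℝ × ℝ,
      Real.exp (-(π * p.1 ^ 2 - A12 s₁ s₂ p.1 p.2) / (π * p.1 ^ 2 * z₁)
        - (π * p.2 ^ 2 - A12 s₁ s₂ p.1 p.2) / (π * p.2 ^ 2 * z₂)
        - A12 s₁ s₂ p.1 p.2 * max (1 / (π * p.1 ^ 2 * z₁)) (1 / (π * p.2 ^ 2 * z₂))) ∂μ)
    (u₁ u₂ : ℝ) (hu1 : u₁ ∈ Set.Ioo (0 : ℝ) 1) (hu2 : u₂ ∈ Set.Ioo (0 : ℝ) 1) :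
    F (-1 / Real.log u₁) (-1 / Real.log u₂)
      = ∫ p : ℝ × ℝ,
          u₁ ^ (1 - A12 s₁ s₂ p.1 p.2 / (π * p.1 ^ 2))
            * u₂ ^ (1 - A12 s₁ s₂ p.1 p.2 / (π * p.2 ^ 2))
            * min (u₁ ^ (A12 s₁ s₂ p.1 p.2 / (π * p.1 ^ 2)))
                (u₂ ^ (A12 s₁ s₂ p.1 p.2 / (π * p.2 ^ 2))) ∂μ :=
  max_convolution_copula_is_MO_mixture_general s₁ s₂ μ hsupp F hF u₁ u₂ hu1 hu2
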